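/- arXiv:1912.07561 — 4 statements merged into one kernel-verified Lean document; each statement's English description precedes it below -/
import Mathlib

section
/- For every separable binary classification task on ℝ^d and every ε ≥ 0, AR(ε) = S(2ε). -/
/-!
If `f` is any classifier, the set of points on which a perturbation of norm `< ε` can fool `f`
is itself admissible for `S(2ε)`: two points outside it with different labels are `2ε` apart,
since otherwise `f` would have to give both labels to their midpoint. Conversely, if removing `E`
leaves the classes `2ε` apart, the classifier answering `1` exactly on the open
`ε`-neighbourhood of `M₊ \ E` can only be fooled on `E`, by the triangle inequality.
-/

open MeasureTheory Metric Set
open scoped ENNReal NNReal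

noncomputable section

/-- The Euclidean space `ℝ^d` with the `ℓ₂` metric. -/
abbrev Euc (d : ℕ) := EuclideanSpace ℝ (Fin d)

/-- A (binary) classifier: a measurable function with values in `{-1, 1}`. -/
def IsClassifier {d : ℕ} (f : Euc d → ℝ) : Prop :=
  Measurable f ∧ ∀ x, f x = 1 ∨ f x = -1

/-- The (standard) risk `R(f) = ℙ_{X ∼ 𝒟}(f(X) ≠ h(X))` of a classifier `f`
with respect to the data distribution `𝒟` and the ground truth `h`. -/
def risk {d : ℕ} (𝒟 : Measure (Euc d)) (h f : Euc d → ℝ) : ℝ≥0∞ :=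
  𝒟 {x | f x ≠ h x}

/-- The adversarial risk
`AR(f,ε) = ℙ_{X ∼ 𝒟}(∃ η, ‖η‖₂ < ε ∧ f(X+η) ≠ h(X))`. -/
def advRisk {d : ℕ} (𝒟 : Measure (Euc d)) (h f : Euc d → ℝ) (ε : ℝ) : ℝ≥0∞ :=
  𝒟 {x | ∃ η : Euc d, ‖η‖ < ε ∧ f (x + η) ≠ h x}

/-- `AR(ε)`: the infimum of the adversarial risk over all measurable classifiers. -/
def optAdvRisk {d : ℕ} (𝒟 : Measure (Euc d)) (h : Euc d → ℝ) (ε : ℝ) : ℝ≥0∞ :=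
  ⨅ (f : Euc d → ℝ) (_ : IsClassifier f), advRisk 𝒟 h f ε

/-- The `ℓ₂` distance between two sets, as an extended nonnegative real
(`∞` if one of the sets is empty). -/
def setEDist {d : ℕ} (A B : Set (Euc d)) : ℝ≥0∞ :=
  ⨅ a ∈ A, ⨅ b ∈ B, edist a b

/-- The separation function `S(ε)`: the infimum, over measurable sets `E` whose
removal separates the two classes `M₋ = h⁻¹({-1})` and `M₊ = h⁻¹({1})` by
distance at least `ε`, of the probability mass of `E`. -/
def sep {d : ℕ} (𝒟 : Measure (Euc d)) (h : Euc d → ℝ) (ε : ℝ) : ℝ≥0∞ :=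
  ⨅ (E : Set (Euc d)) (_ : MeasurableSet E)
    (_ : ENNReal.ofReal ε ≤ setEDist (h ⁻¹' {-1} \ E) (h ⁻¹' {1} \ E)), 𝒟 E

section Adversarial

variable {X β : Type*}

def advErrorSet [PseudoMetricSpace X] (f h : X → β) (ε : ℝ) : Set X :=
  {x | ∃ y ∈ ball x ε, f y ≠ h x}

lemma measurableSet_advErrorSet [PseudoMetricSpace X] [MeasurableSpace X]
    [OpensMeasurableSpace X] [MeasurableSpace β] [MeasurableSingletonClass β] {h : X → β}
    (hh : Measurable h) (hrange : (range h).Countable) (f : X → β) (ε : ℝ) :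
    MeasurableSet (advErrorSet f h ε) := by
  have hunion : advErrorSet f h ε = ⋃ c ∈ range h, h ⁻¹' {c} ∩ thickening ε {y | f y ≠ c} := by
    ext x
    simp only [advErrorSet, mem_ball, mem_iUnion, mem_inter_iff, mem_preimage,
      mem_singleton_iff, mem_thickening_iff, mem_ofPred_eq, exists_prop, mem_range]
    constructor
    · rintro ⟨y, hy, hne⟩
      exact ⟨h x, ⟨x, rfl⟩, rfl, y, hne, dist_comm x y ▸ hy⟩
    · rintro ⟨_, _, rfl, y, hne, hy⟩
      exact ⟨y, dist_comm x y ▸ hy, hne⟩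
  rw [hunion]
  exact .biUnion hrange fun c _ ↦
    (hh (measurableSet_singleton c)).inter isOpen_thickening.measurableSet

lemma two_mul_le_dist_of_notMem_advErrorSet [NormedAddCommGroup X] [NormedSpace ℝ X]
    {f h : X → β} {ε : ℝ} {a b : X} (ha : a ∉ advErrorSet f h ε) (hb : b ∉ advErrorSet f h ε)
    (hab : h a ≠ h b) : 2 * ε ≤ dist a b := by
  by_contra! hlt
  have hma : midpoint ℝ a b ∈ ball a ε := by
    rw [mem_ball, dist_midpoint_left, Real.norm_two]; linarith
  have hmb : midpoint ℝ a b ∈ ball b ε := by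
    rw [mem_ball, dist_midpoint_right, Real.norm_two]; linarith
  have hfa : f (midpoint ℝ a b) = h a := by
    by_contra hne; exact ha ⟨_, hma, hne⟩
  have hfb : f (midpoint ℝ a b) = h b := by
    by_contra hne; exact hb ⟨_, hmb, hne⟩
  exact hab (hfa.symm.trans hfb)

open Classical in
def thickeningClassifier [PseudoMetricSpace X] (S : Set X) (ε : ℝ) (x : X) : ℝ :=
  if x ∈ thickening ε S then 1 else -1

lemma advErrorSet_thickeningClassifier_subset [PseudoMetricSpace X] {h : X → ℝ}
    (hh : ∀ x, h x = 1 ∨ h x = -1) {E : Set X} {ε : ℝ}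
    (hsep : ∀ a ∈ h ⁻¹' {-1} \ E, ENNReal.ofReal (2 * ε) ≤ infEDist a (h ⁻¹' {1} \ E)) :
    advErrorSet (thickeningClassifier (h ⁻¹' {1} \ E) ε) h ε ⊆ E := by
  rintro x ⟨y, hy, hne⟩
  by_contra hxE
  rw [mem_ball] at hy
  rcases hh x with hx | hx
  · have hyS : y ∈ thickening ε (h ⁻¹' {1} \ E) :=
      mem_thickening_iff.mpr ⟨x, ⟨hx, hxE⟩, hy⟩
    simp [thickeningClassifier, hyS, hx] at hne
  · have hyS : y ∈ thickening ε (h ⁻¹' {1} \ E) := by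
      by_contra hyS
      simp [thickeningClassifier, hyS, hx] at hne
    have hx2 : x ∈ thickening (2 * ε) (h ⁻¹' {1} \ E) := by
      rw [two_mul]
      exact thickening_thickening_subset ε ε _ <|
        mem_thickening_iff.mpr ⟨y, hyS, dist_comm x y ▸ hy⟩
    exact (mem_thickening_iff_infEDist_lt.mp hx2).not_ge (hsep x ⟨hx, hxE⟩)

end Adversarial

lemma isClassifier_thickeningClassifier {d : ℕ} (S : Set (Euc d)) (ε : ℝ) :
    IsClassifier (thickeningClassifier S ε) := by
  refine ⟨Measurable.ite isOpen_thickening.measurableSet measurable_const measurable_const,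
    fun x ↦ ?_⟩
  unfold thickeningClassifier
  split_ifs <;> simp

lemma le_setEDist_iff {d : ℕ} {A B : Set (Euc d)} {r : ℝ≥0∞} :
    r ≤ setEDist A B ↔ ∀ a ∈ A, r ≤ infEDist a B := by
  simp only [setEDist, infEDist, le_iInf_iff]

lemma advRisk_eq_measure_advErrorSet {d : ℕ} (𝒟 : Measure (Euc d)) (h f : Euc d → ℝ) (ε : ℝ) :
    advRisk 𝒟 h f ε = 𝒟 (advErrorSet f h ε) := by
  unfold advRisk
  congr 1
  ext x
  constructor
  · rintro ⟨η, hη, hne⟩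
    exact ⟨x + η, by rwa [mem_ball, dist_eq_norm, add_sub_cancel_left], hne⟩
  · rintro ⟨y, hy, hne⟩
    exact ⟨y - x, by rwa [← dist_eq_norm], by rwa [add_sub_cancel]⟩

lemma optAdvRisk_le_sep {d : ℕ} (𝒟 : Measure (Euc d)) {h : Euc d → ℝ} (hh : IsClassifier h)
    (ε : ℝ) : optAdvRisk 𝒟 h ε ≤ sep 𝒟 h (2 * ε) := by
  refine le_iInf₂ fun E _ ↦ le_iInf fun hsep ↦ ?_
  calc optAdvRisk 𝒟 h ε ≤ advRisk 𝒟 h (thickeningClassifier (h ⁻¹' {1} \ E) ε) ε :=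
        iInf₂_le _ (isClassifier_thickeningClassifier _ ε)
    _ ≤ 𝒟 E := by
      rw [advRisk_eq_measure_advErrorSet]
      exact measure_mono (advErrorSet_thickeningClassifier_subset hh.2 (le_setEDist_iff.mp hsep))

lemma sep_le_optAdvRisk {d : ℕ} (𝒟 : Measure (Euc d)) {h : Euc d → ℝ} (hh : IsClassifier h)
    (ε : ℝ) : sep 𝒟 h (2 * ε) ≤ optAdvRisk 𝒟 h ε := by
  refine le_iInf₂ fun f _ ↦ ?_
  have hrange : (range h).Countable :=
    (countable_singleton 1).insert (-1) |>.mono <| by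
      rintro _ ⟨x, rfl⟩; rcases hh.2 x with hx | hx <;> simp [hx]
  have hsep : ENNReal.ofReal (2 * ε) ≤
      setEDist (h ⁻¹' {-1} \ advErrorSet f h ε) (h ⁻¹' {1} \ advErrorSet f h ε) := by
    refine le_setEDist_iff.mpr fun a ha ↦ le_infEDist.mpr fun b hb ↦ ?_
    rw [edist_dist]
    refine ENNReal.ofReal_le_ofReal (two_mul_le_dist_of_notMem_advErrorSet ha.2 hb.2 ?_)
    rw [ha.1, hb.1]; norm_num
  rw [advRisk_eq_measure_advErrorSet]
  exact iInf₂_le_of_le _ (measurableSet_advErrorSet hh.1 hrange f ε) (iInf_le _ hsep)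

theorem stmt2_general (d : ℕ) (𝒟 : Measure (Euc d))
    (h : Euc d → ℝ) (hh : IsClassifier h) (ε : ℝ) :
    optAdvRisk 𝒟 h ε = sep 𝒟 h (2 * ε) :=
  (optAdvRisk_le_sep 𝒟 hh ε).antisymm (sep_le_optAdvRisk 𝒟 hh ε)

/-- Lemma 1: for every separable binary classification task on `ℝ^d` and every
`ε ≥ 0`, `AR(ε) = S(2ε)`. -/
theorem stmt2 (d : ℕ) (𝒟 : Measure (Euc d)) [IsProbabilityMeasure 𝒟]
    (h : Euc d → ℝ) (hh : IsClassifier h) (ε : ℝ) (hε : 0 ≤ ε) :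
    optAdvRisk 𝒟 h ε = sep 𝒟 h (2 * ε) :=
  stmt2_general d 𝒟 h hh ε
end
end

section
/- Let (M,dist) be a metric space with ε-doubling dimension dd, and let N ⊆ M be a set whose points have pairwise distances at least r. Then for every point x ∈ M and every radius t with r ≤ t ≤ ε, the ball B_t(x) contains at most 2^{dd·⌈log₂(2t/r)⌉} points of N. -/
open MeasureTheory Metric Set
open scoped ENNReal NNReal

noncomputable section

/-!
Halving the radius `k = ⌈log₂ (2t / r)⌉` times covers `B_t(x)` by `(2 ^ dd) ^ k` balls of radius at
most `r / 2`, and such a ball contains at most one point of the `r`-separated set `N`.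
-/

/-- The `ε`-doubling dimension of `M` is the least `log₂ n` for which this holds. -/
def CoversBallsByHalfBalls (M : Type*) [PseudoMetricSpace M] (ε : ℝ) (n : ℕ) : Prop :=
  ∀ (x : M) (s : ℝ), 0 < s → s ≤ ε →
    ∃ T : Finset M, T.card ≤ n ∧ ball x s ⊆ ⋃ y ∈ T, ball y (s / 2)

section Separated

variable {M : Type*} [PseudoMetricSpace M] {N : Set M} {r : ℝ}

theorem encard_inter_ball_le_one_of_pairwise_le_dist (hN : N.Pairwise fun a b => r ≤ dist a b)
    (x : M) {s : ℝ} (hs : s ≤ r / 2) : (N ∩ ball x s).encard ≤ 1 := by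
  refine Set.encard_le_one_iff.mpr fun a b ⟨haN, ha⟩ ⟨hbN, hb⟩ => ?_
  by_contra hab
  have hlt : dist a b < r :=
    calc dist a b ≤ dist a x + dist b x := dist_triangle_right a b x
      _ < s + s := add_lt_add (mem_ball.mp ha) (mem_ball.mp hb)
      _ ≤ r := by linarith
  exact (hN haN hbN hab).not_gt hlt

theorem encard_inter_ball_le_pow_of_pairwise_le_dist {ε : ℝ} {n : ℕ}
    (hM : CoversBallsByHalfBalls M ε n) (hN : N.Pairwise fun a b => r ≤ dist a b) (k : ℕ) :
    ∀ (x : M) {s : ℝ}, 0 < s → s ≤ ε → s ≤ r / 2 * 2 ^ k →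
      (N ∩ ball x s).encard ≤ ((n ^ k : ℕ) : ℕ∞) := by
  induction k with
  | zero =>
    intro x s _ _ hsr
    simpa using encard_inter_ball_le_one_of_pairwise_le_dist hN x (by simpa using hsr)
  | succ k ih =>
    intro x s hs hsε hsr
    obtain ⟨T, hTcard, hTcov⟩ := hM x s hs hsε
    have hsub : N ∩ ball x s ⊆ ⋃ y ∈ T, N ∩ ball y (s / 2) := by
      rw [← inter_iUnion₂]
      exact inter_subset_inter_right N hTcov
    have hhalf : ∀ y ∈ T, (N ∩ ball y (s / 2)).encard ≤ ((n ^ k : ℕ) : ℕ∞) := fun y _ =>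
      ih y (by linarith) (by linarith) (by rw [pow_succ] at hsr; linarith)
    calc (N ∩ ball x s).encard ≤ ∑ y ∈ T, (N ∩ ball y (s / 2)).encard :=
          (encard_mono hsub).trans (T.set_encard_biUnion_le _)
      _ ≤ T.card • ((n ^ k : ℕ) : ℕ∞) := Finset.sum_le_card_nsmul _ _ _ hhalf
      _ ≤ n • ((n ^ k : ℕ) : ℕ∞) := nsmul_le_nsmul_left zero_le hTcard
      _ = ((n ^ (k + 1) : ℕ) : ℕ∞) := by rw [nsmul_eq_mul, pow_succ']; push_cast; rfl

end Separated

theorem Real.le_pow_natCeil_logb {b a : ℝ} (hb : 1 < b) (ha : 0 < a) :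
    a ≤ b ^ ⌈Real.logb b a⌉₊ := by
  rw [← Real.rpow_natCast, ← Real.logb_le_iff_le_rpow hb ha]
  exact Nat.le_ceil _

theorem stmt5_general (M : Type*) [MetricSpace M] (ε : ℝ) (dd : ℕ)
    (hdd : ∀ (x : M) (s : ℝ), 0 < s → s ≤ ε →
      ∃ T : Finset M, T.card ≤ 2 ^ dd ∧ ball x s ⊆ ⋃ y ∈ T, ball y (s / 2))
    (N : Set M) (r : ℝ) (hr : 0 < r)
    (hN : N.Pairwise fun a b => r ≤ dist a b)
    (x : M) (t : ℝ) (htε : t ≤ ε) :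
    (N ∩ ball x t).encard ≤
      ((2 ^ (dd * ⌈Real.logb 2 (2 * t / r)⌉₊) : ℕ) : ℕ∞) := by
  rcases le_or_gt t 0 with ht | ht
  · simp [ball_eq_empty.mpr ht]
  have hk := Real.le_pow_natCeil_logb one_lt_two (show 0 < 2 * t / r by positivity)
  rw [div_le_iff₀ hr] at hk
  rw [pow_mul]
  exact encard_inter_ball_le_pow_of_pairwise_le_dist hdd hN _ x ht htε (by linarith)

/-- Lemma 2: let `(M, dist)` be a metric space whose `ε`-doubling dimension is
`dd`, i.e. every ball of radius at most `ε` can be covered by `2^dd` balls of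
half the radius. If all pairwise distances in `N ⊆ M` are at least `r`, then
for any `x ∈ M` and any radius `t` with `r ≤ t ≤ ε`, the ball `B_t(x)` contains
at most `2^(dd * ⌈log₂(2t/r)⌉)` points of `N`. -/
theorem stmt5 (M : Type*) [MetricSpace M] (ε : ℝ) (dd : ℕ)
    (hdd : ∀ (x : M) (s : ℝ), 0 < s → s ≤ ε →
      ∃ T : Finset M, T.card ≤ 2 ^ dd ∧ ball x s ⊆ ⋃ y ∈ T, ball y (s / 2))
    (N : Set M) (r : ℝ) (hr : 0 < r)
    (hN : N.Pairwise fun a b => r ≤ dist a b)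
    (x : M) (t : ℝ) (hrt : r ≤ t) (htε : t ≤ ε) :
    (N ∩ ball x t).encard ≤
      ((2 ^ (dd * ⌈Real.logb 2 (2 * t / r)⌉₊) : ℕ) : ℕ∞) :=
  stmt5_general M ε dd hdd N r hr hN x t htε
end
end

section
/- Let d ≥ 1 and ε > 0. For every β > 2√d, the random cube partition of ℝ^d with parameter ε is (ε, β, 2d^{3/2}/β)-padded: every block has ℓ₂-diameter ε, and for every x ∈ ℝ^d, ℙ_{v∼U([0,ε/√d]^d)}[ B_{ε/β}(x) ⊄ π_v(x) ] ≤ 2d^{3/2}/β. -/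
/-! A block of the cube partition is a half-open cube of side `s = ε/√d`, so its `ℓ₂`-diameter
is `√d · s = ε`. If the ball `B_r(x)` is not contained in the block of `x`, some coordinate of
the ball crosses a lattice hyperplane, so `v i` lies within `r` of `x i` modulo `s`. On the
circle `ℝ/sℤ` this is a ball of length at most `2r`, so each coordinate is bad with probability
at most `2r/s`; a union bound over the `d` coordinates gives `2dr/s = 2d^{3/2}/β` for
`r = ε/β`. -/

open MeasureTheory Metric Set
open scoped ENNReal NNReal

noncomputable section

/-- The block of the cube partition with side `s` and shift `v` containing the
point `x`: the set of points lying in the same half-open cube of the shifted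
lattice `v + s·ℤ^d` as `x`.  (Assigning each boundary point to the cube first
crossed by the ray `x + α(1,…,1)`, `α ≥ 0`, amounts exactly to using the
half-open cubes `∏ᵢ [v i + s kᵢ, v i + s (kᵢ+1))`.) -/
def cubeBlock (d : ℕ) (s : ℝ) (v : Fin d → ℝ) (x : Euc d) : Set (Euc d) :=
  {y | ∀ i, ⌊(y i - v i) / s⌋ = ⌊(x i - v i) / s⌋}

/-- The uniform probability measure on the fundamental box `[0,s]^d`
(the distribution of the random shift of the cube partition). -/
def boxMeasure (d : ℕ) (s : ℝ) : Measure (Fin d → ℝ) :=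
  (volume (Set.pi Set.univ fun _ : Fin d => Set.Icc (0 : ℝ) s))⁻¹ •
    volume.restrict (Set.pi Set.univ fun _ : Fin d => Set.Icc (0 : ℝ) s)

open Filter Topology

section HalfOpenCube

variable {ι : Type*} [Fintype ι]

theorem EuclideanSpace.dist_le_sqrt_card_mul {x y : EuclideanSpace ℝ ι} {c : ℝ} (hc : 0 ≤ c)
    (h : ∀ i, dist (x i) (y i) ≤ c) : dist x y ≤ √(Fintype.card ι) * c := by
  rw [EuclideanSpace.dist_eq, ← Real.sqrt_sq hc, ← Real.sqrt_mul (Nat.cast_nonneg _)]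
  gcongr
  calc ∑ i, dist (x i) (y i) ^ 2 ≤ ∑ _i : ι, c ^ 2 := by
        gcongr with i; exact h i
    _ = Fintype.card ι * c ^ 2 := by simp

theorem EuclideanSpace.dist_add_const (x : EuclideanSpace ℝ ι) (t : ℝ) :
    dist x (x + WithLp.toLp 2 (Function.const ι t)) = √(Fintype.card ι) * |t| := by
  rw [dist_self_add_right, PiLp.norm_toLp_const (p := 2) ENNReal.ofNat_ne_top, Real.sqrt_eq_rpow]
  norm_num

theorem ediam_halfOpenCube (a : ι → ℝ) {s : ℝ} (hs : 0 < s) :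
    ediam {y : EuclideanSpace ℝ ι | ∀ i, y i ∈ Ico (a i) (a i + s)} =
      ENNReal.ofReal (√(Fintype.card ι) * s) := by
  apply le_antisymm
  · refine ediam_le fun y hy z hz => ?_
    rw [edist_dist]
    refine ENNReal.ofReal_le_ofReal (EuclideanSpace.dist_le_sqrt_card_mul hs.le fun i => ?_)
    rw [Real.dist_eq, abs_sub_le_iff]
    constructor <;> linarith [(hy i).1, (hy i).2, (hz i).1, (hz i).2]
  · set corner : EuclideanSpace ℝ ι := WithLp.toLp 2 a
    have hlim : Tendsto (fun t => ENNReal.ofReal (√(Fintype.card ι) * t)) (𝓝[<] s)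
        (𝓝 (ENNReal.ofReal (√(Fintype.card ι) * s))) :=
      ENNReal.tendsto_ofReal <|
        ((continuous_const.mul continuous_id).tendsto s).mono_left nhdsWithin_le_nhds
    -- The half-open cube does not contain the far corner; approach it along the diagonal.
    refine le_of_tendsto hlim <| mem_of_superset (Ioo_mem_nhdsLT hs) fun t ht => ?_
    have hmem : ∀ u ∈ Ico 0 s, corner + WithLp.toLp 2 (Function.const ι u) ∈
        {y : EuclideanSpace ℝ ι | ∀ i, y i ∈ Ico (a i) (a i + s)} := fun u hu i => by
      simp only [corner, PiLp.add_apply, Function.const_apply]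
      constructor <;> linarith [hu.1, hu.2]
    have := edist_le_ediam_of_mem (hmem 0 ⟨le_rfl, hs⟩) (hmem t (Ioo_subset_Ico_self ht))
    rwa [edist_dist, Function.const_zero, WithLp.toLp_zero, add_zero,
      EuclideanSpace.dist_add_const, abs_of_pos ht.1] at this

end HalfOpenCube

theorem cubeBlock_eq (d : ℕ) {s : ℝ} (hs : 0 < s) (v : Fin d → ℝ) (x : Euc d) :
    cubeBlock d s v x = {y : Euc d | ∀ i, y i ∈
      Ico (v i + s * ⌊(x i - v i) / s⌋) (v i + s * ⌊(x i - v i) / s⌋ + s)} := by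
  ext y
  refine forall_congr' fun i => ?_
  rw [Int.floor_eq_iff, le_div_iff₀ hs, div_lt_iff₀ hs, mem_Ico]
  constructor <;> rintro ⟨h₁, h₂⟩ <;> constructor <;> linarith

theorem ediam_cubeBlock (d : ℕ) {s : ℝ} (hs : 0 < s) (v : Fin d → ℝ) (x : Euc d) :
    ediam (cubeBlock d s v x) = ENNReal.ofReal (√d * s) := by
  rw [cubeBlock_eq d hs, ediam_halfOpenCube _ hs, Fintype.card_fin]

theorem exists_int_mul_mem_uIcc_of_floor_div_ne {s u u' : ℝ} (hs : 0 < s)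
    (h : ⌊u / s⌋ ≠ ⌊u' / s⌋) : ∃ k : ℤ, s * k ∈ uIcc u u' := by
  rcases h.lt_or_gt with h | h
  · refine ⟨⌊u' / s⌋, Icc_subset_uIcc ⟨?_, ?_⟩⟩
    · rw [Int.floor_lt, div_lt_iff₀' hs] at h; exact h.le
    · rw [← le_div_iff₀' hs]; exact Int.floor_le _
  · refine ⟨⌊u / s⌋, Icc_subset_uIcc' ⟨?_, ?_⟩⟩
    · rw [Int.floor_lt, div_lt_iff₀' hs] at h; exact h.le
    · rw [← le_div_iff₀' hs]; exact Int.floor_le _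

theorem AddCircle.norm_coe_le_abs_sub_of_floor_div_ne {s u u' : ℝ} (hs : 0 < s)
    (h : ⌊u / s⌋ ≠ ⌊u' / s⌋) : ‖(u : AddCircle s)‖ ≤ |u - u'| := by
  obtain ⟨k, hk⟩ := exists_int_mul_mem_uIcc_of_floor_div_ne hs h
  have hcoe : ((u - k • s : ℝ) : AddCircle s) = u := by
    rw [AddCircle.coe_sub, AddCircle.coe_zsmul, AddCircle.coe_period, smul_zero, sub_zero]
  calc ‖(u : AddCircle s)‖ = ‖((u - k • s : ℝ) : AddCircle s)‖ := by rw [hcoe]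
    _ ≤ |u - s * k| := by
      rw [zsmul_eq_mul, mul_comm, ← Real.norm_eq_abs]; exact QuotientAddGroup.norm_mk_le_norm
    _ ≤ |u - u'| := by
      rw [abs_sub_comm u, abs_sub_comm u]; exact abs_sub_left_of_mem_uIcc hk

theorem exists_dist_coe_lt_of_not_ball_subset_cubeBlock {d : ℕ} {s r : ℝ} (hs : 0 < s)
    {v : Fin d → ℝ} {x : Euc d} (h : ¬ ball x r ⊆ cubeBlock d s v x) :
    ∃ i, dist (v i : AddCircle s) (x i) < r := by
  obtain ⟨y, hy, hyx⟩ := not_subset.mp h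
  obtain ⟨i, hi⟩ : ∃ i, ⌊(x i - v i) / s⌋ ≠ ⌊(y i - v i) / s⌋ := by
    simpa [cubeBlock, eq_comm] using hyx
  refine ⟨i, ?_⟩
  calc dist (v i : AddCircle s) (x i) = ‖((x i - v i : ℝ) : AddCircle s)‖ := by
        rw [dist_comm, dist_eq_norm, AddCircle.coe_sub]
    _ ≤ |x i - v i - (y i - v i)| := AddCircle.norm_coe_le_abs_sub_of_floor_div_ne hs hi
    _ = dist (x i) (y i) := by rw [sub_sub_sub_cancel_right, Real.dist_eq]
    _ ≤ dist x y := PiLp.dist_apply_le x y i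
    _ < r := by rw [dist_comm]; exact hy

theorem boxMeasure_coord_mem_le {d : ℕ} {s : ℝ} (hs : 0 < s) (i : Fin d) (A : Set ℝ) :
    boxMeasure d s {v | v i ∈ A} ≤ volume (A ∩ Icc 0 s) / ENNReal.ofReal s := by
  classical
  set a := ENNReal.ofReal s
  set t := Function.update (fun _ : Fin d => Icc (0 : ℝ) s) i (A ∩ Icc 0 s)
  have ha₀ : a ≠ 0 := ENNReal.ofReal_ne_zero_iff.mpr hs
  have hsub : {v : Fin d → ℝ | v i ∈ A} ∩ univ.pi (fun _ => Icc 0 s) ⊆ univ.pi t := by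
    rintro v ⟨hvA, hv⟩ j -
    rcases eq_or_ne j i with rfl | hji
    · simpa [t] using ⟨hvA, hv j (mem_univ j)⟩
    · simpa [t, hji] using hv j (mem_univ j)
  have hvol_t : volume (univ.pi t) = volume (A ∩ Icc 0 s) * a ^ (d - 1) := by
    simp only [t, volume_pi_pi, Function.apply_update (fun _ (S : Set ℝ) => volume S)]
    rw [Finset.prod_update_of_mem (Finset.mem_univ i)]
    simp [a, Real.volume_Icc, Finset.card_sdiff]
  have hpow : a ^ d = a ^ (d - 1) * a := by
    rw [← pow_succ, Nat.sub_add_cancel (Fin.pos i)]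
  calc boxMeasure d s {v | v i ∈ A}
      = (a ^ d)⁻¹ * volume ({v : Fin d → ℝ | v i ∈ A} ∩ univ.pi fun _ => Icc 0 s) := by
        rw [boxMeasure, Measure.smul_apply, smul_eq_mul,
          Measure.restrict_apply' (MeasurableSet.univ_pi fun _ => measurableSet_Icc),
          volume_pi_pi]
        simp [a, Real.volume_Icc]
    _ ≤ (a ^ d)⁻¹ * (volume (A ∩ Icc 0 s) * a ^ (d - 1)) := by
        rw [← hvol_t]; gcongr
    _ = volume (A ∩ Icc 0 s) / a := by
        rw [hpow, ENNReal.mul_inv (Or.inl (pow_ne_zero _ ha₀)) (Or.inl (by simp [a])),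
          div_eq_mul_inv, mul_comm, mul_assoc, ← mul_assoc (a ^ (d - 1)),
          ENNReal.mul_inv_cancel (pow_ne_zero _ ha₀) (by simp [a]), one_mul]

theorem AddCircle.volume_coe_preimage_ball_inter_Icc_le {s : ℝ} [Fact (0 < s)]
    (c : AddCircle s) (r : ℝ) :
    volume (((↑) : ℝ → AddCircle s) ⁻¹' ball c r ∩ Icc 0 s) ≤ ENNReal.ofReal (2 * r) := by
  calc volume (((↑) : ℝ → AddCircle s) ⁻¹' ball c r ∩ Icc 0 s)
      = volume (((↑) : ℝ → AddCircle s) ⁻¹' ball c r ∩ Ioc 0 (0 + s)) := by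
        rw [zero_add]; exact measure_congr (ae_eq_set_inter (ae_eq_refl _) Ioc_ae_eq_Icc.symm)
    _ = volume (ball c r) :=
        (AddCircle.add_projection_respects_measure s 0 measurableSet_ball).symm
    _ ≤ volume (closedBall c r) := measure_mono ball_subset_closedBall
    _ = ENNReal.ofReal (min s (2 * r)) := AddCircle.volume_closedBall s r
    _ ≤ ENNReal.ofReal (2 * r) := ENNReal.ofReal_le_ofReal (min_le_right _ _)

theorem boxMeasure_not_ball_subset_cubeBlock_le {d : ℕ} {s : ℝ} (hs : 0 < s) (x : Euc d)
    (r : ℝ) :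
    boxMeasure d s {v | ¬ ball x r ⊆ cubeBlock d s v x} ≤ ENNReal.ofReal (d * (2 * r / s)) := by
  have : Fact (0 < s) := ⟨hs⟩
  calc boxMeasure d s {v | ¬ ball x r ⊆ cubeBlock d s v x}
      ≤ boxMeasure d s (⋃ i, {v | (v i : AddCircle s) ∈ ball (x i : AddCircle s) r}) :=
        measure_mono fun v hv => mem_iUnion.mpr
          (exists_dist_coe_lt_of_not_ball_subset_cubeBlock hs hv)
    _ ≤ ∑ i, boxMeasure d s {v | (v i : AddCircle s) ∈ ball (x i : AddCircle s) r} :=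
        measure_iUnion_fintype_le _ _
    _ ≤ ∑ _i : Fin d, ENNReal.ofReal (2 * r) / ENNReal.ofReal s := by
        gcongr with i
        exact (boxMeasure_coord_mem_le hs i _).trans
          (ENNReal.div_le_div_right (AddCircle.volume_coe_preimage_ball_inter_Icc_le _ r) _)
    _ = ENNReal.ofReal (d * (2 * r / s)) := by
        rw [Finset.sum_const, Finset.card_univ, Fintype.card_fin, nsmul_eq_mul,
          ← ENNReal.ofReal_div_of_pos hs, ← ENNReal.ofReal_natCast,
          ← ENNReal.ofReal_mul (Nat.cast_nonneg d)]

theorem stmt7_general (d : ℕ) (hd : 1 ≤ d) (ε β : ℝ) (hε : 0 < ε) :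
    (∀ (v : Fin d → ℝ) (x : Euc d),
      EMetric.diam (cubeBlock d (ε / Real.sqrt d) v x) = ENNReal.ofReal ε) ∧
    (∀ x : Euc d,
      boxMeasure d (ε / Real.sqrt d)
        {v | ¬ ball x (ε / β) ⊆ cubeBlock d (ε / Real.sqrt d) v x} ≤
      ENNReal.ofReal (2 * (d : ℝ) ^ ((3 : ℝ) / 2) / β)) := by
  have hd₀ : (0 : ℝ) < d := by exact_mod_cast hd
  have hsqrt : 0 < √(d : ℝ) := Real.sqrt_pos.mpr hd₀
  have hs : 0 < ε / √(d : ℝ) := div_pos hε hsqrt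
  refine ⟨fun v x => ?_, fun x => ?_⟩
  · exact (ediam_cubeBlock d hs v x).trans (by rw [mul_div_cancel₀ _ hsqrt.ne'])
  · refine (boxMeasure_not_ball_subset_cubeBlock_le hs x _).trans_eq (congrArg _ ?_)
    rw [show (3 : ℝ) / 2 = 1 + 1 / 2 by norm_num, Real.rpow_add hd₀, Real.rpow_one,
      ← Real.sqrt_eq_rpow]
    field_simp

/-- Lemma 3: for `d ≥ 1`, `ε > 0` and every `β > 2√d`, the random cube partition
of `ℝ^d` with parameter `ε` (cubes of side `ε/√d`, uniformly random shift
`v ∈ [0, ε/√d]^d`) is `(ε, β, 2d^{3/2}/β)`-padded: every block has `ℓ₂`-diameter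
`ε`, and for every `x ∈ ℝ^d`,
`ℙ_v[ B_{ε/β}(x) ⊄ π_v(x) ] ≤ 2 d^{3/2} / β`. -/
theorem stmt7 (d : ℕ) (hd : 1 ≤ d) (ε β : ℝ) (hε : 0 < ε)
    (hβ : 2 * Real.sqrt d < β) :
    (∀ (v : Fin d → ℝ) (x : Euc d),
      EMetric.diam (cubeBlock d (ε / Real.sqrt d) v x) = ENNReal.ofReal ε) ∧
    (∀ x : Euc d,
      boxMeasure d (ε / Real.sqrt d)
        {v | ¬ ball x (ε / β) ⊆ cubeBlock d (ε / Real.sqrt d) v x} ≤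
      ENNReal.ofReal (2 * (d : ℝ) ^ ((3 : ℝ) / 2) / β)) :=
  stmt7_general d hd ε β hε
end
end

section
/- (Theorem 1, cube partitions.) Let (𝒟,h) be a separable binary classification task on ℝ^d (d ≥ 1), let f be a measurable classifier, let ε > 0 and β > 2√d, and let g_v be the smoothed classifier obtained from the cube partition of ℝ^d with parameter εβ and uniformly random shift v ∈ [0, εβ/√d]^d. Then 𝔼_v[AR(g_v, ε)] ≤ 2·S(εβ) + 2·R(f) + 2d^{3/2}/β; moreover, if AR(ε) > 0 then 𝔼_v[AR(g_v, ε)] ≤ (2·S(εβ)/S(2ε))·AR(ε) + 2·R(f) + 2d^{3/2}/β. (Setting α := 2d^{3/2}/β this is the paper's bound AR(g,ε) ≤ 2S(2d^{3/2}ε/α) + 2R(f) + α.) -/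
open MeasureTheory Metric Set
open scoped ENNReal NNReal

noncomputable section

/-- The support of a Borel measure on `ℝ^d`: the set of points all of whose
neighborhoods have positive mass. -/
def msupport {d : ℕ} (𝒟 : Measure (Euc d)) : Set (Euc d) :=
  {x | ∀ r : ℝ, 0 < r → 0 < 𝒟 (ball x r)}

/-- `sgn t = 1` if `t ≥ 0` and `sgn t = -1` otherwise. -/
def sgn (t : ℝ) : ℝ := if 0 ≤ t then 1 else -1

/-- `sgn (𝔼_{Z ∼ 𝒟}[f(Z) ∣ Z ∈ A])`: the sign of the conditional expectation of
`f` under `𝒟` given the block `A`. -/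
def smoothVal {d : ℕ} (𝒟 : Measure (Euc d)) (f : Euc d → ℝ) (A : Set (Euc d)) : ℝ :=
  sgn ((∫ z in A, f z ∂𝒟) / (𝒟 A).toReal)

/-! For a fixed shift `v`, choose a set `E` of mass close to `S(εβ)` off which the two classes are
`εβ` apart. The cubes of side `εβ/√d` have diameter `< εβ`, so off `E` the ground truth is constant
on each cube, and the majority vote of `f` on a cube errs on at most twice the mass of `E` and of
the errors of `f` in that cube; summing over the cubes, `R(g_v) ≤ 2𝒟(E) + 2R(f)`. A perturbation
of norm `< ε` can only move `x` to another cube when `x` is `ε`-close to a face, and a uniformly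
random shift puts a fixed `x` there with probability at most `d · 2ε / (εβ/√d) = 2d^{3/2}/β`;
Fubini turns this into the additive term. The second bound follows from `S(2ε) ≤ AR(ε)`: off the
set of points where a classifier is not `ε`-robust, the classes are `2ε` apart, since at the
midpoint of two closer points with different labels it disagrees with one of them. -/

open ProbabilityTheory
open scoped Pointwise

lemma Int.floor_add_div_eq_floor_div {s a t ε : ℝ} (hs : 0 < s)
    (ha : ∀ m : ℤ, ε ≤ |a - m * s|) (ht : |t| < ε) : ⌊(a + t) / s⌋ = ⌊a / s⌋ := by
  set k := ⌊a / s⌋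
  have hk : k * s ≤ a := (le_div_iff₀ hs).1 (Int.floor_le _)
  have hk' : a < (k + 1) * s := (div_lt_iff₀ hs).1 (Int.lt_floor_add_one _)
  have hlow := ha k
  have hup := ha (k + 1)
  rw [abs_of_nonneg (by linarith)] at hlow
  rw [abs_of_neg (by push_cast; linarith)] at hup
  push_cast at hup
  rw [Int.floor_eq_iff, le_div_iff₀ hs, div_lt_iff₀ hs]
  constructor <;> linarith [abs_lt.1 ht]

lemma tsum_measure_preimage_singleton_inter {α β : Type*} [MeasurableSpace α]
    [MeasurableSpace β] [Countable β] [MeasurableSingletonClass β] (μ : Measure α)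
    {f : α → β} (hf : Measurable f) (S : Set α) :
    ∑' b, μ (f ⁻¹' {b} ∩ S) = μ S := by
  have hfib : ∀ b, MeasurableSet (f ⁻¹' {b}) := fun b => hf (measurableSet_singleton b)
  calc ∑' b, μ (f ⁻¹' {b} ∩ S) = ∑' b, μ.restrict S (f ⁻¹' {b}) := by
        simp only [Measure.restrict_apply (hfib _)]
    _ = μ.restrict S (⋃ b, f ⁻¹' {b}) :=
        (measure_iUnion (pairwise_disjoint_fiber f) hfib).symm
    _ = μ S := by
        rw [← preimage_iUnion, iUnion_of_singleton, preimage_univ, Measure.restrict_apply_univ]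

lemma measure_setOf_measure_fiber_eq_zero {α β : Type*} [MeasurableSpace α]
    [MeasurableSpace β] [Countable β] [MeasurableSingletonClass β] (μ : Measure α)
    {f : α → β} (hf : Measurable f) : μ {x | μ (f ⁻¹' {f x}) = 0} = 0 := by
  rw [← tsum_measure_preimage_singleton_inter μ hf, ENNReal.tsum_eq_zero]
  intro b
  rcases eq_empty_or_nonempty (f ⁻¹' {b} ∩ {x | μ (f ⁻¹' {f x}) = 0}) with hempty | ⟨x, hxb, hx⟩
  · rw [hempty, measure_empty]
  · rw [mem_preimage, mem_singleton_iff] at hxb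
    exact measure_mono_null inter_subset_left (hxb ▸ hx)

lemma setEDist_le_edist {d : ℕ} {A B : Set (Euc d)} {a b : Euc d} (ha : a ∈ A) (hb : b ∈ B) :
    setEDist A B ≤ edist a b :=
  iInf₂_le_of_le a ha (iInf₂_le b hb)

section Classification

variable {d : ℕ} {𝒟 : Measure (Euc d)} {h f : Euc d → ℝ}

lemma eq_of_dist_lt_of_le_setEDist (hh : ∀ x, h x = 1 ∨ h x = -1) {E : Set (Euc d)} {r : ℝ}
    (hsep : ENNReal.ofReal r ≤ setEDist (h ⁻¹' {-1} \ E) (h ⁻¹' {1} \ E))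
    {y z : Euc d} (hy : y ∉ E) (hz : z ∉ E) (hyz : dist y z < r) : h y = h z := by
  have key : ∀ {a b : Euc d}, a ∉ E → b ∉ E → dist a b < r → h a = -1 → h b = 1 → False :=
    fun ha hb hab ha' hb' => (hsep.trans (setEDist_le_edist ⟨ha', ha⟩ ⟨hb', hb⟩)).not_gt
      (edist_lt_ofReal.2 hab)
  rcases hh y with hy' | hy' <;> rcases hh z with hz' | hz'
  · rw [hy', hz']
  · exact (key hz hy (dist_comm y z ▸ hyz) hz' hy').elim
  · exact (key hy hz hyz hy' hz').elim
  · rw [hy', hz']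

lemma sep_two_mul_le_advRisk (𝒟 : Measure (Euc d)) (h f : Euc d → ℝ) (ε : ℝ) :
    sep 𝒟 h (2 * ε) ≤ advRisk 𝒟 h f ε := by
  set V := {x | ∃ η : Euc d, ‖η‖ < ε ∧ f (x + η) ≠ h x}
  refine iInf₂_le_of_le (toMeasurable 𝒟 V) (measurableSet_toMeasurable _ _)
    (iInf_le_of_le ?_ (measure_toMeasurable V).le)
  refine le_iInf₂ fun a ha => le_iInf₂ fun b hb => le_of_not_gt fun hab => ?_
  have hab : dist a b < 2 * ε := edist_lt_ofReal.1 hab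
  set m := midpoint ℝ a b
  have ham : ‖m - a‖ < ε := by
    rw [← dist_eq_norm, dist_comm, dist_left_midpoint]
    norm_num
    linarith
  have hbm : ‖m - b‖ < ε := by
    rw [← dist_eq_norm, dist_comm, dist_right_midpoint]
    norm_num
    linarith
  by_cases hfa : f m = h a
  · refine hb.2 (subset_toMeasurable _ _ ⟨m - b, hbm, ?_⟩)
    rw [add_sub_cancel, hfa, ha.1, hb.1]
    norm_num
  · exact ha.2 (subset_toMeasurable _ _ ⟨m - a, ham, by rwa [add_sub_cancel]⟩)

lemma sep_two_mul_le_optAdvRisk (𝒟 : Measure (Euc d)) (h : Euc d → ℝ) (ε : ℝ) :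
    sep 𝒟 h (2 * ε) ≤ optAdvRisk 𝒟 h ε :=
  le_iInf₂ fun f _ => sep_two_mul_le_advRisk 𝒟 h f ε

lemma le_two_mul_sep_add {r : ℝ} {a b : ℝ≥0∞}
    (H : ∀ E, MeasurableSet E →
      ENNReal.ofReal r ≤ setEDist (h ⁻¹' {-1} \ E) (h ⁻¹' {1} \ E) → a ≤ 2 * 𝒟 E + b) :
    a ≤ 2 * sep 𝒟 h r + b := by
  simp only [sep, ENNReal.mul_iInf_of_ne two_ne_zero ENNReal.ofNat_ne_top, ENNReal.iInf_add]
  exact le_iInf₂ fun E hE => le_iInf (H E hE)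

lemma smoothVal_eq_of_measure_lt [IsFiniteMeasure 𝒟] (hf : IsClassifier f) {A : Set (Euc d)}
    (hA : MeasurableSet A) {τ : ℝ} (hτ : τ = 1 ∨ τ = -1)
    (hlt : 𝒟 (A ∩ {x | f x ≠ τ}) < 𝒟 (A ∩ {x | f x = τ})) : smoothVal 𝒟 f A = τ := by
  set P := {x | f x = τ}
  have hP : MeasurableSet P := hf.1 (measurableSet_singleton τ)
  have hint : IntegrableOn f A 𝒟 :=
    (Integrable.of_bound hf.1.aestronglyMeasurable 1 (ae_of_all _ fun x => by
      rcases hf.2 x with hx | hx <;> simp [hx])).integrableOn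
  have hneg : ∀ x ∈ A \ P, f x = -τ := fun x hx => by
    rcases hf.2 x with h1 | h1 <;> rcases hτ with rfl | rfl <;> simp_all [P]
  have hintegral : ∫ x in A, f x ∂𝒟 = τ * (𝒟.real (A ∩ P) - 𝒟.real (A \ P)) := by
    rw [← integral_inter_add_sdiff hP hint, setIntegral_congr_fun (hA.inter hP) fun x hx => hx.2,
      setIntegral_congr_fun (hA.diff hP) hneg, setIntegral_const, setIntegral_const, smul_eq_mul,
      smul_eq_mul]
    ring
  have hlt' : 𝒟.real (A \ P) < 𝒟.real (A ∩ P) :=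
    (ENNReal.toReal_lt_toReal (measure_ne_top _ _) (measure_ne_top _ _)).2 hlt
  have hpos : 0 < 𝒟.real A := by
    rw [← measureReal_inter_add_sdiff hP]
    linarith [measureReal_nonneg (μ := 𝒟) (s := A \ P)]
  rw [smoothVal, hintegral, sgn]
  rcases hτ with rfl | rfl
  · exact if_pos (div_nonneg (by linarith) hpos.le)
  · exact if_neg (not_le.2 (div_neg_of_neg_of_pos (by linarith) hpos))

lemma measure_inter_smoothVal_ne_le [IsFiniteMeasure 𝒟] (hf : IsClassifier f)
    {A E : Set (Euc d)} (hA : MeasurableSet A) {τ : ℝ} (hτ : τ = 1 ∨ τ = -1)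
    (hlabel : ∀ y ∈ A \ E, h y = τ) :
    𝒟 (A ∩ {x | smoothVal 𝒟 f A ≠ h x}) ≤ 2 * 𝒟 (A ∩ E) + 2 * 𝒟 (A ∩ {x | f x ≠ h x}) := by
  by_cases hvote : smoothVal 𝒟 f A = τ
  · have hsub : A ∩ {x | smoothVal 𝒟 f A ≠ h x} ⊆ A ∩ E := fun x ⟨hxA, hx⟩ =>
      ⟨hxA, by_contra fun hxE => hx (hvote.trans (hlabel x ⟨hxA, hxE⟩).symm)⟩
    calc _ ≤ 𝒟 (A ∩ E) := measure_mono hsub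
      _ ≤ 2 * 𝒟 (A ∩ E) := le_mul_of_one_le_left' one_le_two
      _ ≤ _ := le_self_add
  · have hminority : 𝒟 (A ∩ {x | f x = τ}) ≤ 𝒟 (A ∩ {x | f x ≠ τ}) :=
      not_lt.1 (mt (smoothVal_eq_of_measure_lt hf hA hτ) hvote)
    have hsub : A ∩ {x | f x ≠ τ} ⊆ (A ∩ E) ∪ (A ∩ {x | f x ≠ h x}) := fun x ⟨hxA, hx⟩ =>
      (em (x ∈ E)).imp (fun hxE => ⟨hxA, hxE⟩) fun hxE =>
        ⟨hxA, show f x ≠ h x by rwa [hlabel x ⟨hxA, hxE⟩]⟩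
    calc _ ≤ 𝒟 A := measure_mono inter_subset_left
      _ = 𝒟 (A ∩ {x | f x = τ}) + 𝒟 (A ∩ {x | f x ≠ τ}) :=
          (measure_inter_add_sdiff A (hf.1 (measurableSet_singleton τ))).symm
      _ ≤ 2 * 𝒟 (A ∩ {x | f x ≠ τ}) := by rw [two_mul]; gcongr
      _ ≤ 2 * (𝒟 (A ∩ E) + 𝒟 (A ∩ {x | f x ≠ h x})) := by
          gcongr
          exact (measure_mono hsub).trans (measure_union_le _ _)
      _ = _ := mul_add _ _ _

end Classification

section Cubes

variable {d : ℕ} {s : ℝ} {v : Fin d → ℝ}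

def cubeIndex (s : ℝ) (v : Fin d → ℝ) (x : Euc d) : Fin d → ℤ :=
  fun i => ⌊(x i - v i) / s⌋

def faceNbhd (s ε : ℝ) (v : Fin d → ℝ) : Set (Euc d) :=
  {x | ∃ i, ∃ m : ℤ, |x i - v i - m * s| < ε}

lemma cubeBlock_eq_preimage_cubeIndex (x : Euc d) :
    cubeBlock d s v x = cubeIndex s v ⁻¹' {cubeIndex s v x} := by
  ext y
  simp [cubeBlock, cubeIndex, funext_iff]

lemma measurable_cubeIndex : Measurable (cubeIndex (d := d) s v) :=
  measurable_pi_lambda _ fun i => Measurable.floor (by fun_prop)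

lemma dist_lt_of_cubeIndex_eq (hd : 0 < d) (hs : 0 < s) {y z : Euc d}
    (hyz : cubeIndex s v y = cubeIndex s v z) : dist y z < s * √d := by
  have hcoord : ∀ i, dist (y i) (z i) < s := fun i => by
    have := Int.abs_sub_lt_one_of_floor_eq_floor (congrFun hyz i)
    rwa [← sub_div, sub_sub_sub_cancel_right, abs_div, abs_of_pos hs, div_lt_one hs] at this
  have : Nonempty (Fin d) := ⟨⟨0, hd⟩⟩
  calc dist y z = √(∑ i, dist (y i) (z i) ^ 2) := EuclideanSpace.dist_eq y z
    _ < √(∑ _i : Fin d, s ^ 2) := Real.sqrt_lt_sqrt (by positivity)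
        (Finset.sum_lt_sum_of_nonempty Finset.univ_nonempty fun i _ =>
          pow_lt_pow_left₀ (hcoord i) dist_nonneg two_ne_zero)
    _ = s * √d := by
        rw [Finset.sum_const, Finset.card_univ, Fintype.card_fin, nsmul_eq_mul,
          Real.sqrt_mul (Nat.cast_nonneg d), Real.sqrt_sq hs.le, mul_comm]

lemma cubeIndex_add_of_notMem_faceNbhd (hs : 0 < s) {ε : ℝ} {x η : Euc d}
    (hx : x ∉ faceNbhd s ε v) (hη : ‖η‖ < ε) : cubeIndex s v (x + η) = cubeIndex s v x := by
  simp only [faceNbhd, mem_ofPred_eq, not_exists, not_lt] at hx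
  funext i
  have hi : (x + η) i - v i = (x i - v i) + η i := by simp only [PiLp.add_apply]; ring
  simp only [cubeIndex, hi]
  exact Int.floor_add_div_eq_floor_div hs (hx i) ((PiLp.norm_apply_le η i).trans_lt hη)

end Cubes

section RandomShift

variable {d : ℕ} {s : ℝ}

lemma volume_Ioc_inter_setOf_exists_abs_sub_lt_le (hs : 0 < s) (c ε : ℝ) :
    volume (Ioc 0 s ∩ {t | ∃ m : ℤ, |c - t - m * s| < ε}) ≤ ENNReal.ofReal (2 * ε) := by
  have hD := isAddFundamentalDomain_Ioc hs 0
  rw [zero_add] at hD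
  have hcover : Ioc 0 s ∩ {t | ∃ m : ℤ, |c - t - m * s| < ε} ⊆
      ⋃ g : AddSubgroup.zmultiples s, (g +ᵥ Ioo (c - ε) (c + ε)) ∩ Ioc 0 s := by
    rintro t ⟨ht, m, hm⟩
    refine mem_iUnion.2 ⟨⟨(-m) • s, zsmul_mem (AddSubgroup.mem_zmultiples s) _⟩, ?_, ht⟩
    rw [mem_vadd_set_iff_neg_vadd_mem]
    simp only [AddSubgroup.vadd_def, vadd_eq_add, mem_Ioo, zsmul_eq_mul]
    push_cast
    constructor <;> linarith [abs_lt.1 hm]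
  calc volume (Ioc 0 s ∩ {t | ∃ m : ℤ, |c - t - m * s| < ε})
      ≤ ∑' g : AddSubgroup.zmultiples s, volume ((g +ᵥ Ioo (c - ε) (c + ε)) ∩ Ioc 0 s) :=
        (measure_mono hcover).trans (measure_iUnion_le _)
    _ = ENNReal.ofReal (2 * ε) := by
        rw [← hD.measure_eq_tsum, Real.volume_Ioo]
        ring_nf

lemma cond_Icc_setOf_exists_abs_sub_lt_le (hs : 0 < s) (c ε : ℝ) :
    volume[|Icc (0 : ℝ) s] {t | ∃ m : ℤ, |c - t - m * s| < ε} ≤ ENNReal.ofReal (2 * ε / s) := by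
  set T := {t : ℝ | ∃ m : ℤ, |c - t - m * s| < ε}
  have hae := ae_eq_set_inter (Ioc_ae_eq_Icc (a := 0) (b := s) (μ := volume)).symm (ae_eq_refl T)
  rw [cond_apply measurableSet_Icc, Real.volume_Icc, sub_zero, measure_congr hae,
    ENNReal.ofReal_div_of_pos hs, ENNReal.div_eq_inv_mul]
  gcongr
  exact volume_Ioc_inter_setOf_exists_abs_sub_lt_le hs c ε

lemma boxMeasure_eq_pi :
    boxMeasure d s = Measure.pi fun _ : Fin d => volume[|Icc (0 : ℝ) s] := by
  refine (Measure.pi_eq fun S hS => ?_).symm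
  rw [boxMeasure, Measure.smul_apply, smul_eq_mul,
    Measure.restrict_apply (MeasurableSet.univ_pi hS), ← pi_inter_distrib, volume_pi_pi,
    volume_pi_pi, ENNReal.prod_inv_distrib fun _ _ _ _ _ => Or.inr measure_Icc_lt_top.ne,
    ← Finset.prod_mul_distrib]
  exact Finset.prod_congr rfl fun i _ => by rw [cond_apply measurableSet_Icc, inter_comm]

lemma isProbabilityMeasure_cond_Icc (hs : 0 < s) : IsProbabilityMeasure volume[|Icc (0 : ℝ) s] :=
  cond_isProbabilityMeasure_of_finite (by simp [hs]) measure_Icc_lt_top.ne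

lemma isProbabilityMeasure_boxMeasure (hs : 0 < s) : IsProbabilityMeasure (boxMeasure d s) := by
  have := isProbabilityMeasure_cond_Icc hs
  rw [boxMeasure_eq_pi]
  infer_instance

lemma boxMeasure_preimage_eval (hs : 0 < s) (i : Fin d) {T : Set ℝ} (hT : MeasurableSet T) :
    boxMeasure d s ((fun v => v i) ⁻¹' T) = volume[|Icc (0 : ℝ) s] T := by
  have := isProbabilityMeasure_cond_Icc hs
  rw [boxMeasure_eq_pi]
  exact (measurePreserving_eval _ i).measure_preimage hT.nullMeasurableSet

lemma lintegral_measure_faceNbhd_le (𝒟 : Measure (Euc d)) [IsProbabilityMeasure 𝒟]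
    (hs : 0 < s) (ε : ℝ) :
    ∫⁻ v, 𝒟 (faceNbhd s ε v) ∂boxMeasure d s ≤ ENNReal.ofReal (d * (2 * ε / s)) := by
  set B : Set ((Fin d → ℝ) × Euc d) := {p | p.2 ∈ faceNbhd s ε p.1}
  have hB : MeasurableSet B := by
    have hB' : B = ⋃ (i : Fin d) (m : ℤ),
        {p : (Fin d → ℝ) × Euc d | |p.2 i - p.1 i - m * s| < ε} := by
      ext p
      simp [B, faceNbhd]
    rw [hB']
    exact .iUnion fun i => .iUnion fun m => measurableSet_lt (by fun_prop) measurable_const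
  have hT : ∀ c : ℝ, MeasurableSet {t : ℝ | ∃ m : ℤ, |c - t - m * s| < ε} := fun c => by
    simp only [ofPred_exists]
    exact .iUnion fun m => measurableSet_lt (by fun_prop) measurable_const
  have hslice : ∀ x : Euc d,
      boxMeasure d s ((fun v => (v, x)) ⁻¹' B) ≤ ENNReal.ofReal (d * (2 * ε / s)) := by
    intro x
    have hunion : (fun v => (v, x)) ⁻¹' B =
        ⋃ i, (fun v : Fin d → ℝ => v i) ⁻¹' {t | ∃ m : ℤ, |x i - t - m * s| < ε} := by
      ext v
      simp [B, faceNbhd]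
    calc boxMeasure d s ((fun v => (v, x)) ⁻¹' B)
        ≤ ∑ i, boxMeasure d s ((fun v => v i) ⁻¹' {t | ∃ m : ℤ, |x i - t - m * s| < ε}) :=
          hunion ▸ measure_iUnion_fintype_le _ _
      _ ≤ ∑ _i : Fin d, ENNReal.ofReal (2 * ε / s) := Finset.sum_le_sum fun i _ =>
          (boxMeasure_preimage_eval hs i (hT _)).trans_le
            (cond_Icc_setOf_exists_abs_sub_lt_le hs _ _)
      _ = ENNReal.ofReal (d * (2 * ε / s)) := by
          rw [Finset.sum_const, Finset.card_univ, Fintype.card_fin, nsmul_eq_mul,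
            ENNReal.ofReal_mul (Nat.cast_nonneg d), ENNReal.ofReal_natCast]
  calc ∫⁻ v, 𝒟 (faceNbhd s ε v) ∂boxMeasure d s = ((boxMeasure d s).prod 𝒟) B :=
        (Measure.prod_apply hB).symm
    _ = ∫⁻ x, boxMeasure d s ((fun v => (v, x)) ⁻¹' B) ∂𝒟 :=
        have := isProbabilityMeasure_boxMeasure (d := d) hs
        Measure.prod_apply_symm hB
    _ ≤ ∫⁻ _, ENNReal.ofReal (d * (2 * ε / s)) ∂𝒟 := lintegral_mono hslice
    _ = ENNReal.ofReal (d * (2 * ε / s)) := by rw [lintegral_const, measure_univ, mul_one]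

end RandomShift

section SmoothedClassifier

variable {d : ℕ} {𝒟 : Measure (Euc d)} {h f : Euc d → ℝ} {s : ℝ} {E : Set (Euc d)}

lemma measure_smoothVal_cubeBlock_ne_le [IsFiniteMeasure 𝒟] (hd : 0 < d)
    (hh : ∀ x, h x = 1 ∨ h x = -1) (hf : IsClassifier f) (hs : 0 < s)
    (hsep : ENNReal.ofReal (s * √d) ≤ setEDist (h ⁻¹' {-1} \ E) (h ⁻¹' {1} \ E))
    (v : Fin d → ℝ) :
    𝒟 {x | smoothVal 𝒟 f (cubeBlock d s v x) ≠ h x} ≤ 2 * 𝒟 E + 2 * risk 𝒟 h f := by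
  rw [risk, ← tsum_measure_preimage_singleton_inter 𝒟 (measurable_cubeIndex (s := s) (v := v)),
    ← tsum_measure_preimage_singleton_inter 𝒟 measurable_cubeIndex E,
    ← tsum_measure_preimage_singleton_inter 𝒟 measurable_cubeIndex {x | f x ≠ h x},
    ← ENNReal.tsum_mul_left, ← ENNReal.tsum_mul_left, ← ENNReal.tsum_add]
  refine ENNReal.tsum_le_tsum fun k => ?_
  set A := cubeIndex s v ⁻¹' {k}
  -- Off `E`, the classes are `s √d`-apart while the cube has diameter `< s √d`.
  obtain ⟨τ, hτ, hlabel⟩ : ∃ τ : ℝ, (τ = 1 ∨ τ = -1) ∧ ∀ y ∈ A \ E, h y = τ := by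
    rcases (A \ E).eq_empty_or_nonempty with hempty | ⟨z, hz⟩
    · exact ⟨1, Or.inl rfl, by simp [hempty]⟩
    · refine ⟨h z, hh z, fun y hy => eq_of_dist_lt_of_le_setEDist hh hsep hy.2 hz.2 ?_⟩
      exact dist_lt_of_cubeIndex_eq hd hs (hy.1.trans hz.1.symm)
  have hblock : A ∩ {x | smoothVal 𝒟 f (cubeBlock d s v x) ≠ h x} =
      A ∩ {x | smoothVal 𝒟 f A ≠ h x} := by
    refine inter_congr_left (fun x ⟨hx, hne⟩ => ?_) fun x ⟨hx, hne⟩ => ?_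
    · rwa [mem_ofPred_eq, cubeBlock_eq_preimage_cubeIndex, (hx : cubeIndex s v x = k)]
    · rwa [mem_ofPred_eq, cubeBlock_eq_preimage_cubeIndex, (hx : cubeIndex s v x = k)] at hne
  rw [hblock]
  exact measure_inter_smoothVal_ne_le hf (measurable_cubeIndex (measurableSet_singleton k)) hτ
    hlabel

lemma advRisk_le [IsFiniteMeasure 𝒟] (hd : 0 < d) (hh : ∀ x, h x = 1 ∨ h x = -1)
    (hf : IsClassifier f) (hs : 0 < s)
    (hsep : ENNReal.ofReal (s * √d) ≤ setEDist (h ⁻¹' {-1} \ E) (h ⁻¹' {1} \ E))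
    {v : Fin d → ℝ} {G : Euc d → ℝ}
    (hG : ∀ x, 𝒟 (cubeBlock d s v x) ≠ 0 → G x = smoothVal 𝒟 f (cubeBlock d s v x)) (ε : ℝ) :
    advRisk 𝒟 h G ε ≤ 𝒟 (faceNbhd s ε v) + (2 * 𝒟 E + 2 * risk 𝒟 h f) := by
  set N := {x | 𝒟 (cubeBlock d s v x) = 0}
  set W := {x | smoothVal 𝒟 f (cubeBlock d s v x) ≠ h x}
  have hsub : {x | ∃ η : Euc d, ‖η‖ < ε ∧ G (x + η) ≠ h x} ⊆ faceNbhd s ε v ∪ (N ∪ W) := by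
    rintro x ⟨η, hη, hne⟩
    by_cases hx : x ∈ faceNbhd s ε v
    · exact Or.inl hx
    by_cases hx0 : x ∈ N
    · exact Or.inr (Or.inl hx0)
    have hcube : cubeBlock d s v (x + η) = cubeBlock d s v x := by
      rw [cubeBlock_eq_preimage_cubeIndex, cubeBlock_eq_preimage_cubeIndex,
        cubeIndex_add_of_notMem_faceNbhd hs hx hη]
    rw [hG (x + η) (hcube ▸ hx0), hcube] at hne
    exact Or.inr (Or.inr hne)
  have hN : 𝒟 N = 0 := by
    simpa only [N, cubeBlock_eq_preimage_cubeIndex] using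
      measure_setOf_measure_fiber_eq_zero 𝒟 (measurable_cubeIndex (s := s) (v := v))
  calc advRisk 𝒟 h G ε ≤ 𝒟 (faceNbhd s ε v) + (𝒟 N + 𝒟 W) :=
        (measure_mono hsub).trans ((measure_union_le _ _).trans
          (add_le_add_right (measure_union_le _ _) _))
    _ ≤ 𝒟 (faceNbhd s ε v) + (2 * 𝒟 E + 2 * risk 𝒟 h f) := by
        rw [hN, zero_add]
        gcongr
        exact measure_smoothVal_cubeBlock_ne_le hd hh hf hs hsep v

lemma lintegral_advRisk_le [IsProbabilityMeasure 𝒟] (hd : 0 < d)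
    (hh : ∀ x, h x = 1 ∨ h x = -1) (hf : IsClassifier f) (hs : 0 < s)
    (hsep : ENNReal.ofReal (s * √d) ≤ setEDist (h ⁻¹' {-1} \ E) (h ⁻¹' {1} \ E))
    {g : (Fin d → ℝ) → Euc d → ℝ}
    (hg : ∀ v x, 𝒟 (cubeBlock d s v x) ≠ 0 → g v x = smoothVal 𝒟 f (cubeBlock d s v x))
    (ε : ℝ) :
    ∫⁻ v, advRisk 𝒟 h (g v) ε ∂boxMeasure d s ≤
      2 * 𝒟 E + 2 * risk 𝒟 h f + ENNReal.ofReal (d * (2 * ε / s)) := by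
  have := isProbabilityMeasure_boxMeasure (d := d) hs
  calc ∫⁻ v, advRisk 𝒟 h (g v) ε ∂boxMeasure d s
      ≤ ∫⁻ v, 𝒟 (faceNbhd s ε v) + (2 * 𝒟 E + 2 * risk 𝒟 h f) ∂boxMeasure d s :=
        lintegral_mono fun v => advRisk_le hd hh hf hs hsep (hg v) ε
    _ = ∫⁻ v, 𝒟 (faceNbhd s ε v) ∂boxMeasure d s + (2 * 𝒟 E + 2 * risk 𝒟 h f) := by
        rw [lintegral_add_right _ measurable_const, lintegral_const, measure_univ, mul_one]
    _ ≤ _ := by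
        rw [add_comm]
        gcongr
        exact lintegral_measure_faceNbhd_le 𝒟 hs ε

end SmoothedClassifier

lemma ENNReal.le_div_mul_of_le {a b c : ℝ≥0∞} (hbc : b ≤ c) (hc0 : c ≠ 0) (hc : c ≠ ⊤) :
    a ≤ a / b * c := by
  rcases eq_or_ne b 0 with rfl | hb
  · rcases eq_or_ne a 0 with rfl | ha
    · exact bot_le
    · rw [ENNReal.div_zero ha, ENNReal.top_mul hc0]
      exact le_top
  · calc a = a / b * b := (ENNReal.div_mul_cancel hb (ne_top_of_le_ne_top hc hbc)).symm
      _ ≤ a / b * c := by gcongr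

theorem stmt13_general (d : ℕ) (hd : 1 ≤ d) (𝒟 : Measure (Euc d))
    [IsProbabilityMeasure 𝒟]
    (h : Euc d → ℝ) (hh : IsClassifier h)
    (f : Euc d → ℝ) (hf : IsClassifier f)
    (ε β : ℝ) (hε : 0 < ε) (hβ : 2 * Real.sqrt d < β)
    (g : (Fin d → ℝ) → Euc d → ℝ)
    (hsmooth : ∀ (v : Fin d → ℝ) (x : Euc d),
      𝒟 (cubeBlock d (ε * β / Real.sqrt d) v x) ≠ 0 →
      g v x = smoothVal 𝒟 f (cubeBlock d (ε * β / Real.sqrt d) v x)) :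
    (∫⁻ v, advRisk 𝒟 h (g v) ε ∂(boxMeasure d (ε * β / Real.sqrt d))) ≤
        2 * sep 𝒟 h (ε * β) + 2 * risk 𝒟 h f +
          ENNReal.ofReal (2 * (d : ℝ) ^ ((3 : ℝ) / 2) / β) ∧
      (0 < optAdvRisk 𝒟 h ε →
        (∫⁻ v, advRisk 𝒟 h (g v) ε ∂(boxMeasure d (ε * β / Real.sqrt d))) ≤
          2 * sep 𝒟 h (ε * β) / sep 𝒟 h (2 * ε) * optAdvRisk 𝒟 h ε +
            2 * risk 𝒟 h f +
            ENNReal.ofReal (2 * (d : ℝ) ^ ((3 : ℝ) / 2) / β)) := by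
  have hsqrt : 0 < √(d : ℝ) := Real.sqrt_pos.2 (by exact_mod_cast hd)
  have hβ0 : 0 < β := (by positivity : (0 : ℝ) ≤ 2 * √d).trans_lt hβ
  have hs : 0 < ε * β / √d := by positivity
  have hdiam : ε * β / √d * √d = ε * β := div_mul_cancel₀ _ hsqrt.ne'
  have hfaces : (d : ℝ) * (2 * ε / (ε * β / √d)) = 2 * (d : ℝ) ^ ((3 : ℝ) / 2) / β := by
    rw [show (3 : ℝ) / 2 = 1 + 1 / 2 by norm_num, Real.rpow_add (by positivity), Real.rpow_one,
      ← Real.sqrt_eq_rpow]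
    field_simp
  have hfirst : ∫⁻ v, advRisk 𝒟 h (g v) ε ∂boxMeasure d (ε * β / √d) ≤
      2 * sep 𝒟 h (ε * β) + 2 * risk 𝒟 h f + ENNReal.ofReal (2 * (d : ℝ) ^ ((3 : ℝ) / 2) / β) := by
    rw [add_assoc]
    refine le_two_mul_sep_add fun E _ hsep => ?_
    rw [← add_assoc, ← hfaces]
    exact lintegral_advRisk_le hd hh.2 hf hs (hdiam.symm ▸ hsep) hsmooth ε
  refine ⟨hfirst, fun hpos => hfirst.trans ?_⟩
  gcongr ?_ + _ + _
  exact ENNReal.le_div_mul_of_le (sep_two_mul_le_optAdvRisk 𝒟 h ε) hpos.ne'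
    (ne_top_of_le_ne_top ENNReal.one_ne_top ((iInf₂_le f hf).trans prob_le_one))

/-- Theorem 1 (cube partitions): let `(𝒟, h)` be a separable binary
classification task on `ℝ^d` (`d ≥ 1`), `f` a measurable classifier, `ε > 0`,
`β > 2√d`, and let `g_v` be the smoothed classifier obtained from the cube
partition of `ℝ^d` with parameter `εβ` (cubes of side `εβ/√d`) and uniformly
random shift `v ∈ [0, εβ/√d]^d`.  Then
`𝔼_v[AR(g_v, ε)] ≤ 2·S(εβ) + 2·R(f) + 2d^{3/2}/β`, and moreover, if
`AR(ε) > 0`, then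
`𝔼_v[AR(g_v, ε)] ≤ (2·S(εβ)/S(2ε))·AR(ε) + 2·R(f) + 2d^{3/2}/β`. -/
theorem stmt13 (d : ℕ) (hd : 1 ≤ d) (𝒟 : Measure (Euc d))
    [IsProbabilityMeasure 𝒟]
    (h : Euc d → ℝ) (hh : IsClassifier h)
    (f : Euc d → ℝ) (hf : IsClassifier f)
    (ε β : ℝ) (hε : 0 < ε) (hβ : 2 * Real.sqrt d < β)
    (g : (Fin d → ℝ) → Euc d → ℝ) (hg : ∀ v, IsClassifier (g v))
    (hsmooth : ∀ (v : Fin d → ℝ) (x : Euc d),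
      𝒟 (cubeBlock d (ε * β / Real.sqrt d) v x) ≠ 0 →
      g v x = smoothVal 𝒟 f (cubeBlock d (ε * β / Real.sqrt d) v x)) :
    (∫⁻ v, advRisk 𝒟 h (g v) ε ∂(boxMeasure d (ε * β / Real.sqrt d))) ≤
        2 * sep 𝒟 h (ε * β) + 2 * risk 𝒟 h f +
          ENNReal.ofReal (2 * (d : ℝ) ^ ((3 : ℝ) / 2) / β) ∧
      (0 < optAdvRisk 𝒟 h ε →
        (∫⁻ v, advRisk 𝒟 h (g v) ε ∂(boxMeasure d (ε * β / Real.sqrt d))) ≤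
          2 * sep 𝒟 h (ε * β) / sep 𝒟 h (2 * ε) * optAdvRisk 𝒟 h ε +
            2 * risk 𝒟 h f +
            ENNReal.ofReal (2 * (d : ℝ) ^ ((3 : ℝ) / 2) / β)) :=
  stmt13_general d hd 𝒟 h hh f hf ε β hε hβ g hsmooth
end
end
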